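/- Write a := A_{1,2} and b := A_{2,3} in P_3. For all nonzero integers n and m, the element [a^n, b^m] · [a, b]^{-nm} lies in Bd_3; consequently the coset of [a, b] generates the quotient group Z_3 / Bd_3. -/

import Mathlib

namespace Braids

/-- The braid relations on the generators `σ_1, …, σ_{n-1}` (indexed by `Fin (n-1)`). -/
def braidRels (n : ℕ) : Set (FreeGroup (Fin (n - 1))) :=
  {r | (∃ i j : Fin (n - 1), (i : ℕ) + 1 = (j : ℕ) ∧
          r = .of i * .of j * .of i * (.of j * .of i * .of j)⁻¹) ∨
       (∃ i j : Fin (n - 1), (i : ℕ) + 2 ≤ (j : ℕ) ∧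
          r = .of i * .of j * (.of j * .of i)⁻¹)}

/-- The Artin braid group on `n` strands, presented by generators and the braid relations. -/
abbrev BraidGroup (n : ℕ) := PresentedGroup (braidRels n)

/-- The Artin generator `σ_{i+1}` (0-indexed). -/
def σ {n : ℕ} (i : Fin (n - 1)) : BraidGroup n := PresentedGroup.of i

/-- The transposition `(i, i+1)` associated to the generator `σ`. -/
def swapGen (n : ℕ) (i : Fin (n - 1)) : Equiv.Perm (Fin n) :=
  Equiv.swap ⟨i.1, by have := i.2; omega⟩ ⟨i.1 + 1, by have := i.2; omega⟩

private lemma swap_braid {α : Type*} [DecidableEq α] {a b c : α}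
    (hab : a ≠ b) (hac : a ≠ c) (hbc : b ≠ c) :
    Equiv.swap a b * Equiv.swap b c * Equiv.swap a b =
      Equiv.swap b c * Equiv.swap a b * Equiv.swap b c := by
  have h1 := Equiv.swap_apply_apply (Equiv.swap a b) b c
  rw [Equiv.swap_apply_right, Equiv.swap_apply_of_ne_of_ne hac.symm hbc.symm,
    Equiv.swap_inv] at h1
  have h2 := Equiv.swap_apply_apply (Equiv.swap b c) a b
  rw [Equiv.swap_apply_of_ne_of_ne hab hac, Equiv.swap_apply_left, Equiv.swap_inv] at h2
  rw [← h1, ← h2]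

private lemma swap_commute {α : Type*} [DecidableEq α] {a b c d : α}
    (hca : c ≠ a) (hcb : c ≠ b) (hda : d ≠ a) (hdb : d ≠ b) :
    Equiv.swap a b * Equiv.swap c d = Equiv.swap c d * Equiv.swap a b := by
  have h := Equiv.swap_apply_apply (Equiv.swap a b) c d
  rw [Equiv.swap_apply_of_ne_of_ne hca hcb, Equiv.swap_apply_of_ne_of_ne hda hdb,
    Equiv.swap_inv] at h
  nth_rewrite 1 [h]
  rw [← mul_assoc, ← mul_assoc, Equiv.swap_mul_self, one_mul]

theorem braidRels_hold (n : ℕ) :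
    ∀ r ∈ braidRels n, FreeGroup.lift (swapGen n) r = 1 := by
  rintro r (⟨i, j, hij, rfl⟩ | ⟨i, j, hij, rfl⟩) <;>
    simp only [map_mul, map_inv, FreeGroup.lift_apply_of, mul_inv_eq_one]
  · have hj : swapGen n j =
        Equiv.swap (⟨i.1 + 1, by have := i.2; have := j.2; omega⟩ : Fin n)
          ⟨i.1 + 2, by have := j.2; omega⟩ := by
      unfold swapGen
      congr 1 <;> simp only [Fin.mk.injEq] <;> omega
    rw [hj]
    exact swap_braid (by simp only [ne_eq, Fin.mk.injEq]; omega)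
      (by simp only [ne_eq, Fin.mk.injEq]; omega) (by simp only [ne_eq, Fin.mk.injEq]; omega)
  · exact swap_commute (by simp only [ne_eq, Fin.mk.injEq]; omega)
      (by simp only [ne_eq, Fin.mk.injEq]; omega) (by simp only [ne_eq, Fin.mk.injEq]; omega)
      (by simp only [ne_eq, Fin.mk.injEq]; omega)

/-- The canonical projection from the braid group to the symmetric group,
sending `σ_i` to the transposition `(i, i+1)`. -/
def toPerm (n : ℕ) : BraidGroup n →* Equiv.Perm (Fin n) :=
  PresentedGroup.toGroup (braidRels_hold n)

/-- The pure braid group on `n` strands, as a subgroup of the braid group. -/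
def PureBraid (n : ℕ) : Subgroup (BraidGroup n) := (toPerm n).ker

/-- The pure braid group `P n` as a group. -/
abbrev P (n : ℕ) := ↥(PureBraid n)

/-- The generator `σ_k` (1-indexed, junk value `1` for out-of-range `k`). -/
def sig (n k : ℕ) : BraidGroup n :=
  if h : 1 ≤ k ∧ k ≤ n - 1 then σ ⟨k - 1, by omega⟩ else 1

/-- The conjugating word `σ_{j-1} σ_{j-2} ⋯ σ_{i+1}`. -/
def chain (n i j : ℕ) : BraidGroup n :=
  (((List.range (j - i - 1)).map (fun t => sig n (j - 1 - t))).prod)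

/-- The pure braid generator `A_{i,j} = σ_{j-1} ⋯ σ_{i+1} σ_i² σ_{i+1}⁻¹ ⋯ σ_{j-1}⁻¹`
(for `1 ≤ i < j ≤ n`; junk values otherwise), as an element of the braid group. -/
def Agen (n i j : ℕ) : BraidGroup n := chain n i j * (sig n i) ^ 2 * (chain n i j)⁻¹

theorem toPerm_sig_sq (n k : ℕ) : (toPerm n (sig n k)) ^ 2 = 1 := by
  unfold sig
  split
  · show (toPerm n (PresentedGroup.of _)) ^ 2 = 1
    rw [toPerm, PresentedGroup.toGroup.of]
    simp [swapGen, sq, Equiv.swap_mul_self]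
  · simp

theorem Agen_mem (n i j : ℕ) : Agen n i j ∈ PureBraid n := by
  have : toPerm n (Agen n i j) = 1 := by
    unfold Agen
    rw [map_mul, map_mul, map_inv, map_pow, toPerm_sig_sq, mul_one, mul_inv_cancel]
  exact this

/-- `A_{i,j}` extended symmetrically: `A_{j,i} := A_{i,j}` and `A_{i,i} := 1`. -/
def ASym (n i j : ℕ) : BraidGroup n := if i = j then 1 else Agen n (min i j) (max i j)

theorem ASym_mem (n i j : ℕ) : ASym n i j ∈ PureBraid n := by
  unfold ASym
  split
  · exact one_mem _
  · exact Agen_mem n _ _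

/-- `A_{0,j} := (A_{1,j} A_{2,j} ⋯ A_{n,j})⁻¹`, as an element of the braid group. -/
def A0gen (n j : ℕ) : BraidGroup n :=
  (((List.range n).map (fun t => ASym n (t + 1) j)).prod)⁻¹

theorem A0gen_mem (n j : ℕ) : A0gen n j ∈ PureBraid n := by
  refine inv_mem (list_prod_mem ?_)
  intro x hx
  simp only [List.mem_map] at hx
  obtain ⟨t, -, rfl⟩ := hx
  exact ASym_mem n _ _

/-- The pure braid generator `A_{i,j}` (with the conventions `A_{j,i} = A_{i,j}`, `A_{i,i} = 1`),
as an element of the pure braid group. -/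
def A (n i j : ℕ) : P n := ⟨ASym n i j, ASym_mem n i j⟩

/-- The element `A_{0,j} = (A_{1,j} A_{2,j} ⋯ A_{n,j})⁻¹` of the pure braid group. -/
def A₀ (n j : ℕ) : P n := ⟨A0gen n j, A0gen_mem n j⟩

/-- The full twist `z_n = A_{1,2} (A_{1,3} A_{2,3}) ⋯ (A_{1,n} A_{2,n} ⋯ A_{n-1,n})`. -/
def fullTwist (n : ℕ) : P n :=
  (((List.range (n - 1)).map
    (fun jt => ((List.range (jt + 1)).map (fun it => A n (it + 1) (jt + 2))).prod)).prod)

/-- The reindexing map associated with removing the `k`-th strand. -/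
def phi (k m : ℕ) : ℕ := if m < k then m else m - 1

/-- `d` is the `k`-th strand-removal homomorphism `P n → P (n-1)`: it is determined by
`d (A_{i,j}) = 1` if `k ∈ {i, j}`, and `d (A_{i,j}) = A_{φ(i),φ(j)}` otherwise. -/
def IsStrandRemoval (n k : ℕ) (d : P n →* P (n - 1)) : Prop :=
  ∀ i j : ℕ, 1 ≤ i → i < j → j ≤ n →
    d (A n i j) = if k = i ∨ k = j then 1 else A (n - 1) (phi k i) (phi k j)

/-- The Brunnian subgroup `Brun_n = ∩_{k=1}^n Ker (d_k)`, for a family `d` of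
strand-removal homomorphisms. -/
def Brunnian (n : ℕ) (d : ℕ → (P n →* P (n - 1))) : Subgroup (P n) :=
  ⨅ k ∈ Finset.Icc 1 n, (d k).ker

/-- `θ` is the automorphism `θ_n` of `P n`: it fixes `A_{i,j}` for `2 ≤ i < j ≤ n` and sends
`A_{1,j}` to `A_{1,j}⁻¹ A_{0,j} A_{1,j}`. -/
def IsTheta (n : ℕ) (θ : MulAut (P n)) : Prop :=
  (∀ i j : ℕ, 2 ≤ i → i < j → j ≤ n → θ (A n i j) = A n i j) ∧
  (∀ j : ℕ, 1 < j → j ≤ n → θ (A n 1 j) = (A n 1 j)⁻¹ * A₀ n j * A n 1 j)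

/-- The homomorphism `∂_n := d_1 ∘ θ_n : P n → P (n-1)`. -/
def del (n : ℕ) (d : ℕ → (P n →* P (n - 1))) (θ : MulAut (P n)) : P n →* P (n - 1) :=
  (d 1).comp θ.toMonoidHom

/-- `Z_n := Brun_n ∩ Ker ∂_n`. -/
def Zgrp (n : ℕ) (d : ℕ → (P n →* P (n - 1))) (θ : MulAut (P n)) : Subgroup (P n) :=
  Brunnian n d ⊓ (del n d θ).ker

/-- `Bd_n := ∂_{n+1}(Brun_{n+1})`, built from strand-removal data on `n+1` strands. -/
def Bd (n : ℕ) (D : ℕ → (P (n + 1) →* P n)) (Θ : MulAut (P (n + 1))) : Subgroup (P n) :=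
  Subgroup.map (del (n + 1) D Θ) (Brunnian (n + 1) D)

/-- `w` is the automorphism `w_n` of `P n`: it fixes `A_{i,j}` for `1 ≤ i < j ≤ n-1` and sends
`A_{i,n}` to `A_{i,n} A_{0,i} A_{i,n}⁻¹` for `1 ≤ i ≤ n-1`. -/
def IsW (n : ℕ) (w : MulAut (P n)) : Prop :=
  (∀ i j : ℕ, 1 ≤ i → i < j → j ≤ n - 1 → w (A n i j) = A n i j) ∧
  (∀ i : ℕ, 1 ≤ i → i ≤ n - 1 → w (A n i n) = A n i n * A₀ n i * (A n i n)⁻¹)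

/-!
Write `a = A₁₂`, `p = A₁₃`, `b = A₂₃`. The full twist `z = a p b` is central in `P₃`, and
`P₃ = ⟨a, p, b⟩` by Schreier's method, with coset representatives of `P₃` in `B₃` indexed by
`Sym(3)`. On four strands, `∂₄` sends `A₁₄, A₂₄, A₃₄` to `c = b⁻¹p⁻¹, p, b` and is onto; since
`a = z c`, the Brunnian braids `[[A₁₄, A₃₄], A₂₄]` and `[A₁₄ [A₁₄, A₂₄⁻¹] A₁₄⁻¹, A₃₄]` are sent to
`[[a, b], p]` and `[[a, b], b]`. Hence `Bd₃` contains the normal closure `K` of `[[a, b], a]` and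
`[[a, b], b]`. Modulo `K` the commutator `[a, b]` is central in `⟨a, b⟩`, which gives
`[aⁿ, bᵐ] ≡ [a, b]^{nm}` and writes every pure braid as `a^α b^β [a, b]^k z^γ`. Unlike `Bd₃`, the
subgroup `K` is killed by every homomorphism to an abelian group; applied to the exponent sums of
`d₁ x, d₂ x, d₃ x`, this forces `α = β = γ = 0` for a Brunnian `x`.
-/

open Subgroup

section Bracket

variable {G : Type*} [Group G]

-- The paper's convention; Mathlib's `⁅x, y⁆` is `x * y * x⁻¹ * y⁻¹`.
def bracket (x y : G) : G := x⁻¹ * y⁻¹ * x * y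

theorem map_bracket {H : Type*} [Group H] (f : G →* H) (x y : G) :
    f (bracket x y) = bracket (f x) (f y) := by
  simp [bracket]

theorem bracket_eq_one_iff {x y : G} : bracket x y = 1 ↔ Commute x y := by
  rw [bracket, mul_assoc _ x y, ← mul_inv_rev, inv_mul_eq_one, eq_comm]
  rfl

theorem map_bracket_eq_one {A : Type*} [CommGroup A] (f : G →* A) (x y : G) :
    f (bracket x y) = 1 := by
  rw [map_bracket, bracket_eq_one_iff]
  exact Commute.all _ _

theorem bracket_mul_left_of_commute {x y z : G} (h : Commute z y) :
    bracket (z * x) y = bracket x y := by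
  simp only [bracket, mul_inv_rev]
  rw [show x⁻¹ * z⁻¹ * y⁻¹ * (z * x) * y = x⁻¹ * (z⁻¹ * (y⁻¹ * z)) * x * y by group,
    ← h.inv_right.eq]
  group

@[simp]
theorem bracket_one_left (y : G) : bracket 1 y = 1 := by simp [bracket]

@[simp]
theorem bracket_one_right (x : G) : bracket x 1 = 1 := by simp [bracket]

variable {x y : G}

theorem bracket_zpow_left (h : Commute (bracket x y) x) (n : ℤ) :
    bracket (x ^ n) y = bracket x y ^ n := by
  have hconj : y⁻¹ * x * y⁻¹⁻¹ = x * bracket x y := by simp [bracket, ← mul_assoc]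
  calc bracket (x ^ n) y = (x ^ n)⁻¹ * (y⁻¹ * x * y⁻¹⁻¹) ^ n := by
        rw [conj_zpow, bracket]; group
    _ = bracket x y ^ n := by rw [hconj, h.symm.mul_zpow]; group

theorem bracket_zpow_right (h : Commute (bracket x y) y) (m : ℤ) :
    bracket x (y ^ m) = bracket x y ^ m := by
  have hconj : x⁻¹ * y⁻¹ * x⁻¹⁻¹ = bracket x y * y⁻¹ := by simp [bracket, mul_assoc]
  calc bracket x (y ^ m) = (x⁻¹ * y⁻¹ * x⁻¹⁻¹) ^ m * y ^ m := by
        rw [conj_zpow, bracket]; group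
    _ = bracket x y ^ m := by rw [hconj, h.inv_right.mul_zpow]; group

theorem bracket_zpow_zpow (hx : Commute (bracket x y) x) (hy : Commute (bracket x y) y)
    (n m : ℤ) : bracket (x ^ n) (y ^ m) = bracket x y ^ (n * m) := by
  have hyn : Commute (bracket (x ^ n) y) y := bracket_zpow_left hx n ▸ hy.zpow_left n
  rw [bracket_zpow_right hyn, bracket_zpow_left hx, zpow_mul]

theorem zpow_mul_zpow_comm (hx : Commute (bracket x y) x) (hy : Commute (bracket x y) y)
    (n m : ℤ) : y ^ m * x ^ n = x ^ n * y ^ m * bracket x y ^ (-(n * m)) := by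
  rw [zpow_neg, ← bracket_zpow_zpow hx hy, bracket]
  group

end Bracket

section NormalForm

variable {G : Type*} [Group G] {x y z : G}

theorem exists_normalForm_mul_zpow (hx : Commute (bracket x y) x)
    (hy : Commute (bracket x y) y) (hzx : Commute z x) (hzy : Commute z y) {w : G}
    (hw : w ∈ ({x, y, z} : Set G)) (ε α β k γ : ℤ) : ∃ α' β' k' γ' : ℤ,
      x ^ α * y ^ β * bracket x y ^ k * z ^ γ * w ^ ε =
        x ^ α' * y ^ β' * bracket x y ^ k' * z ^ γ' := by
  rcases hw with hw | hw | hw <;> subst w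
  · refine ⟨α + ε, β, k - ε * β, γ, ?_⟩
    calc x ^ α * y ^ β * bracket x y ^ k * z ^ γ * x ^ ε
        = x ^ α * y ^ β * bracket x y ^ k * (z ^ γ * x ^ ε) := by group
      _ = x ^ α * y ^ β * (bracket x y ^ k * x ^ ε) * z ^ γ := by
        rw [(hzx.zpow_zpow γ ε).eq]; group
      _ = x ^ α * (y ^ β * x ^ ε) * bracket x y ^ k * z ^ γ := by
        rw [(hx.zpow_zpow k ε).eq]; group
      _ = x ^ (α + ε) * y ^ β * bracket x y ^ (k - ε * β) * z ^ γ := by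
        rw [zpow_mul_zpow_comm hx hy]; group
  · refine ⟨α, β + ε, k, γ, ?_⟩
    calc x ^ α * y ^ β * bracket x y ^ k * z ^ γ * y ^ ε
        = x ^ α * y ^ β * bracket x y ^ k * (z ^ γ * y ^ ε) := by group
      _ = x ^ α * y ^ β * (bracket x y ^ k * y ^ ε) * z ^ γ := by
        rw [(hzy.zpow_zpow γ ε).eq]; group
      _ = x ^ α * y ^ (β + ε) * bracket x y ^ k * z ^ γ := by
        rw [(hy.zpow_zpow k ε).eq]; group
  · exact ⟨α, β, k, γ + ε, by group⟩

theorem exists_normalForm_of_mem_closure (hx : Commute (bracket x y) x)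
    (hy : Commute (bracket x y) y) (hzx : Commute z x) (hzy : Commute z y) {g : G}
    (hg : g ∈ closure {x, y, z}) :
    ∃ α β k γ : ℤ, g = x ^ α * y ^ β * bracket x y ^ k * z ^ γ := by
  induction hg using closure_induction_right with
  | one => exact ⟨0, 0, 0, 0, by simp⟩
  | mul_right g _ w hw ih =>
    obtain ⟨α, β, k, γ, rfl⟩ := ih
    simpa using exists_normalForm_mul_zpow hx hy hzx hzy hw 1 α β k γ
  | mul_inv_cancel g _ w hw ih =>
    obtain ⟨α, β, k, γ, rfl⟩ := ih
    simpa using exists_normalForm_mul_zpow hx hy hzx hzy hw (-1) α β k γ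

end NormalForm

section HeisenbergClosure

variable {G : Type*} [Group G]

def heisenbergClosure (x y : G) : Subgroup G :=
  normalClosure {bracket (bracket x y) x, bracket (bracket x y) y}

variable {x y z : G}

instance : (heisenbergClosure x y).Normal := normalClosure_normal

theorem heisenbergClosure_le {N : Subgroup G} [N.Normal] (hx : bracket (bracket x y) x ∈ N)
    (hy : bracket (bracket x y) y ∈ N) : heisenbergClosure x y ≤ N :=
  normalClosure_le_normal (by rintro _ (rfl | rfl) <;> assumption)

theorem heisenbergClosure_le_ker {A : Type*} [CommGroup A] (f : G →* A) :
    heisenbergClosure x y ≤ f.ker :=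
  normalClosure_le_normal (by rintro _ (rfl | rfl) <;> exact map_bracket_eq_one f _ _)

theorem commute_bracket_map_left {H : Type*} [Group H] {f : G →* H}
    (hf : heisenbergClosure x y ≤ f.ker) : Commute (bracket (f x) (f y)) (f x) := by
  rw [← bracket_eq_one_iff, ← map_bracket, ← map_bracket]
  exact hf (subset_normalClosure (Or.inl rfl))

theorem commute_bracket_map_right {H : Type*} [Group H] {f : G →* H}
    (hf : heisenbergClosure x y ≤ f.ker) : Commute (bracket (f x) (f y)) (f y) := by
  rw [← bracket_eq_one_iff, ← map_bracket, ← map_bracket]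
  exact hf (subset_normalClosure (Or.inr rfl))

theorem bracket_zpow_zpow_mul_mem (n m : ℤ) :
    bracket (x ^ n) (y ^ m) * bracket x y ^ (-(n * m)) ∈ heisenbergClosure x y := by
  have hπ := (QuotientGroup.ker_mk' (heisenbergClosure x y)).ge
  rw [← QuotientGroup.ker_mk' (heisenbergClosure x y), MonoidHom.mem_ker]
  simp only [map_mul, map_zpow, map_bracket]
  rw [bracket_zpow_zpow (commute_bracket_map_left hπ) (commute_bracket_map_right hπ),
    ← zpow_add, add_neg_cancel, zpow_zero]

theorem exists_normalForm_mul_inv_mem (hzx : Commute z x) (hzy : Commute z y)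
    (hgen : closure {x, y, z} = ⊤) (g : G) : ∃ α β k γ : ℤ,
      g * (x ^ α * y ^ β * bracket x y ^ k * z ^ γ)⁻¹ ∈ heisenbergClosure x y := by
  have hπ := (QuotientGroup.ker_mk' (heisenbergClosure x y)).ge
  have hg : QuotientGroup.mk' (heisenbergClosure x y) g ∈
      closure (QuotientGroup.mk' (heisenbergClosure x y) '' {x, y, z}) := by
    rw [← MonoidHom.map_closure, hgen]
    exact mem_map_of_mem _ (mem_top g)
  simp only [Set.image_insert_eq, Set.image_singleton] at hg
  obtain ⟨α, β, k, γ, hαβkγ⟩ := exists_normalForm_of_mem_closure (commute_bracket_map_left hπ)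
    (commute_bracket_map_right hπ) (hzx.map _) (hzy.map _) hg
  refine ⟨α, β, k, γ, ?_⟩
  rw [← QuotientGroup.ker_mk' (heisenbergClosure x y), MonoidHom.mem_ker]
  simp only [map_mul, map_inv, map_zpow, map_bracket, hαβkγ, mul_inv_cancel]

end HeisenbergClosure

theorem ker_le_of_cosetRep {G Q : Type*} [Group G] [Group Q] (f : G →* Q) {S : Set G}
    (hS : closure S = ⊤) {H : Subgroup G} (rep : Q → G) (h1 : rep 1 = 1)
    (hstep : ∀ q, ∀ s ∈ S, rep q * s * (rep (q * f s))⁻¹ ∈ H) : f.ker ≤ H := by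
  have key (g : G) : g * (rep (f g))⁻¹ ∈ H := by
    induction (hS ▸ mem_top g : g ∈ closure S) using closure_induction_right with
    | one => simp [h1]
    | mul_right g _ s hs ih =>
      convert mul_mem ih (hstep (f g) s hs) using 1
      rw [map_mul]; group
    | mul_inv_cancel g _ s hs ih =>
      convert mul_mem ih (inv_mem (hstep (f g * (f s)⁻¹) s hs)) using 1
      rw [inv_mul_cancel_right, map_mul, map_inv]; group
  intro g hg
  simpa [(MonoidHom.mem_ker).1 hg, h1] using key g

def σ₁ : BraidGroup 3 := σ ⟨0, by norm_num⟩
def σ₂ : BraidGroup 3 := σ ⟨1, by norm_num⟩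

theorem closure_σ₁_σ₂ : closure {σ₁, σ₂} = ⊤ := by
  rw [← PresentedGroup.closure_range_of]
  congr 1
  ext g
  constructor
  · rintro (rfl | rfl)
    exacts [⟨0, rfl⟩, ⟨1, rfl⟩]
  · rintro ⟨i, rfl⟩
    fin_cases i
    exacts [Or.inl rfl, Or.inr rfl]

theorem braid_rel : σ₁ * σ₂ * σ₁ = σ₂ * σ₁ * σ₂ := by
  have h : PresentedGroup.mk (braidRels 3)
      (.of 0 * .of 1 * .of 0 * (.of 1 * .of 0 * .of 1)⁻¹) = 1 :=
    (QuotientGroup.eq_one_iff _).2 (subset_normalClosure (Or.inl ⟨0, 1, rfl, rfl⟩))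
  rwa [map_mul, map_inv, mul_inv_eq_one] at h

def halfTwist : BraidGroup 3 := σ₁ * σ₂ * σ₁

theorem halfTwist_eq : halfTwist = σ₂ * σ₁ * σ₂ := braid_rel

theorem σ₁_mul_σ₂_mul_σ₁ : σ₁ * σ₂ * σ₁ = halfTwist := rfl

theorem halfTwist_mul_σ₁ : halfTwist * σ₁ = σ₂ * halfTwist := by
  conv_lhs => rw [halfTwist_eq]
  simp only [halfTwist]; group

theorem halfTwist_mul_σ₂ : halfTwist * σ₂ = σ₁ * halfTwist := by
  conv_rhs => rw [halfTwist_eq]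
  simp only [halfTwist]; group

theorem coe_A_one_two : (A 3 1 2 : BraidGroup 3) = σ₁ ^ 2 := by
  simp [A, ASym, Agen, chain, sig, σ₁]

theorem coe_A_one_three : (A 3 1 3 : BraidGroup 3) = σ₂ * σ₁ ^ 2 * σ₂⁻¹ := by
  simp [A, ASym, Agen, chain, sig, σ₁, σ₂, List.range_succ]

theorem coe_A_two_three : (A 3 2 3 : BraidGroup 3) = σ₂ ^ 2 := by
  simp [A, ASym, Agen, chain, sig, σ₂]

def cosetRep (π : Equiv.Perm (Fin 3)) : BraidGroup 3 :=
  if π = 1 then 1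
  else if π = Equiv.swap 0 1 then σ₁
  else if π = Equiv.swap 1 2 then σ₂
  else if π = Equiv.swap 0 1 * Equiv.swap 1 2 then σ₁ * σ₂
  else if π = Equiv.swap 1 2 * Equiv.swap 0 1 then σ₂ * σ₁
  else halfTwist

theorem pureBraid_three_le_closure :
    PureBraid 3 ≤ closure {(A 3 1 2 : BraidGroup 3), ↑(A 3 1 3), ↑(A 3 2 3)} := by
  simp only [coe_A_one_two, coe_A_one_three, coe_A_two_three, sq]
  set H := closure {σ₁ * σ₁, σ₂ * (σ₁ * σ₁) * σ₂⁻¹, σ₂ * σ₂}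
  have ha : σ₁ * σ₁ ∈ H := subset_closure (by simp)
  have hp : σ₂ * (σ₁ * σ₁) * σ₂⁻¹ ∈ H := subset_closure (by simp)
  have hb : σ₂ * σ₂ ∈ H := subset_closure (by simp)
  have hperm : ∀ π : Equiv.Perm (Fin 3), π ∈ [1, Equiv.swap 0 1, Equiv.swap 1 2,
      Equiv.swap 0 1 * Equiv.swap 1 2, Equiv.swap 1 2 * Equiv.swap 0 1,
      Equiv.swap 0 1 * Equiv.swap 1 2 * Equiv.swap 0 1] := by decide
  simp only [List.mem_cons, List.not_mem_nil, or_false] at hperm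
  refine ker_le_of_cosetRep (toPerm 3) closure_σ₁_σ₂ cosetRep (by simp [cosetRep]) ?_
  intro π s hs
  rcases hs with rfl | rfl <;> rcases hperm π with rfl | rfl | rfl | rfl | rfl | rfl <;>
    simp +decide only [cosetRep, ↓reduceIte, one_mul, mul_one, inv_one, σ₁_mul_σ₂_mul_σ₁,
      ← halfTwist_eq, mul_inv_cancel, one_mem]
  · exact ha
  · simpa only [mul_assoc] using hp
  · convert hb using 1
    rw [halfTwist_mul_σ₁, halfTwist_eq]; group
  · exact hb
  · convert mul_mem (mul_mem ha hp) (inv_mem ha) using 1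
    calc σ₁ * σ₂ * σ₂ * σ₁⁻¹ = σ₁ * (σ₂ * halfTwist) * σ₂⁻¹ * σ₁⁻¹ * σ₁⁻¹ := by
          rw [halfTwist_eq]; group
      _ = σ₁ * (halfTwist * σ₁) * σ₂⁻¹ * σ₁⁻¹ * σ₁⁻¹ := by rw [halfTwist_mul_σ₁]
      _ = σ₁ * σ₁ * (σ₂ * (σ₁ * σ₁) * σ₂⁻¹) * (σ₁ * σ₁)⁻¹ := by rw [halfTwist]; group
  · convert ha using 1
    rw [halfTwist_mul_σ₂, halfTwist]; group

theorem fullTwist_three : fullTwist 3 = A 3 1 2 * A 3 1 3 * A 3 2 3 := by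
  simp [fullTwist, List.range_succ, mul_assoc]

theorem coe_fullTwist_three : (fullTwist 3 : BraidGroup 3) = halfTwist ^ 2 := by
  rw [fullTwist_three, Subgroup.coe_mul, Subgroup.coe_mul, coe_A_one_two, coe_A_one_three,
    coe_A_two_three]
  calc σ₁ ^ 2 * (σ₂ * σ₁ ^ 2 * σ₂⁻¹) * σ₂ ^ 2 = σ₁ * (halfTwist * σ₁) * σ₂ := by
        simp only [sq, halfTwist]; group
    _ = σ₁ * σ₂ * (halfTwist * σ₂) := by rw [halfTwist_mul_σ₁]; group
    _ = halfTwist ^ 2 := by rw [halfTwist_mul_σ₂, sq, ← σ₁_mul_σ₂_mul_σ₁]; group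

theorem commute_halfTwist_sq (g : BraidGroup 3) : Commute (halfTwist ^ 2) g := by
  have hg : halfTwist ^ 2 ∈ centralizer (closure {σ₁, σ₂}) := by
    rw [centralizer_closure, mem_centralizer_iff]
    rintro s (rfl | rfl)
    · calc σ₁ * halfTwist ^ 2 = halfTwist * σ₂ * halfTwist := by
            rw [sq, ← mul_assoc, ← halfTwist_mul_σ₂]
        _ = halfTwist ^ 2 * σ₁ := by rw [mul_assoc, ← halfTwist_mul_σ₁, ← mul_assoc, sq]
    · calc σ₂ * halfTwist ^ 2 = halfTwist * σ₁ * halfTwist := by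
            rw [sq, ← mul_assoc, ← halfTwist_mul_σ₁]
        _ = halfTwist ^ 2 * σ₂ := by rw [mul_assoc, ← halfTwist_mul_σ₂, ← mul_assoc, sq]
  rw [closure_σ₁_σ₂] at hg
  exact (mem_centralizer_iff.1 hg g (mem_top g)).symm

theorem commute_fullTwist_three (x : P 3) : Commute (fullTwist 3) x :=
  Subtype.ext (by
    rw [Subgroup.coe_mul, Subgroup.coe_mul, coe_fullTwist_three]
    exact commute_halfTwist_sq x)

theorem closure_A_three : closure {A 3 1 2, A 3 1 3, A 3 2 3} = ⊤ := by
  refine eq_top_iff.2 fun x _ => ?_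
  have hx := pureBraid_three_le_closure x.2
  rw [← Set.image_pair, ← Set.image_insert_eq, ← Subgroup.coe_subtype,
    ← MonoidHom.map_closure] at hx
  obtain ⟨y, hy, hyx⟩ := mem_map.1 hx
  rwa [← Subtype.ext hyx]

theorem closure_A_one_two_A_two_three_fullTwist :
    closure {A 3 1 2, A 3 2 3, fullTwist 3} = ⊤ := by
  refine eq_top_iff.2 (closure_A_three ▸ closure_le _ |>.2 ?_)
  rintro g (rfl | rfl | rfl)
  · exact subset_closure (Or.inl rfl)
  · rw [show A 3 1 3 = (A 3 1 2)⁻¹ * fullTwist 3 * (A 3 2 3)⁻¹ by rw [fullTwist_three]; group]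
    exact mul_mem (mul_mem (inv_mem (subset_closure (Or.inl rfl)))
      (subset_closure (Or.inr (Or.inr rfl)))) (inv_mem (subset_closure (Or.inr (Or.inl rfl))))
  · exact subset_closure (Or.inr (Or.inl rfl))

section StrandRemoval

variable {n k : ℕ} {d : P n →* P (n - 1)}

theorem IsStrandRemoval.map_A_of_eq (hd : IsStrandRemoval n k d) {i j : ℕ} (hi : 1 ≤ i)
    (hij : i < j) (hj : j ≤ n) (hk : k = i ∨ k = j) : d (A n i j) = 1 := by
  rw [hd i j hi hij hj, if_pos hk]

theorem IsStrandRemoval.map_A_of_ne (hd : IsStrandRemoval n k d) {i j : ℕ} (hi : 1 ≤ i)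
    (hij : i < j) (hj : j ≤ n) (hki : k ≠ i) (hkj : k ≠ j) :
    d (A n i j) = A (n - 1) (phi k i) (phi k j) := by
  rw [hd i j hi hij hj, if_neg (by tauto)]

theorem IsStrandRemoval.map_A_of_lt (hd : IsStrandRemoval n k d) {i j : ℕ} (hki : k < i)
    (hij : i < j) (hj : j ≤ n) : d (A n i j) = A (n - 1) (i - 1) (j - 1) := by
  rw [hd.map_A_of_ne (by omega) hij hj (by omega) (by omega), phi, phi,
    if_neg (by omega), if_neg (by omega)]

def IsStrandRemovalFamily (n : ℕ) (d : ℕ → (P n →* P (n - 1))) : Prop :=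
  ∀ k, 1 ≤ k → k ≤ n → IsStrandRemoval n k (d k)

theorem mem_brunnian_iff {d : ℕ → (P n →* P (n - 1))} {w : P n} :
    w ∈ Brunnian n d ↔ ∀ k, 1 ≤ k → k ≤ n → d k w = 1 := by
  simp only [Brunnian, mem_iInf, MonoidHom.mem_ker, Finset.mem_Icc, and_imp]

instance (d : ℕ → (P n →* P (n - 1))) : (Brunnian n d).Normal :=
  normal_iInf_normal fun _ => normal_iInf_normal fun _ => MonoidHom.normal_ker _

end StrandRemoval

def exponentSum (n : ℕ) : BraidGroup n →* Multiplicative ℤ :=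
  PresentedGroup.toGroup (f := fun _ => Multiplicative.ofAdd 1) (by
    rintro r (⟨i, j, -, rfl⟩ | ⟨i, j, -, rfl⟩) <;> simp)

theorem exponentSum_A_two : exponentSum 2 (A 2 1 2) = Multiplicative.ofAdd 2 := by
  have h : (A 2 1 2 : BraidGroup 2) = σ 0 ^ 2 := by simp [A, ASym, Agen, chain, sig]
  rw [h, map_pow]
  rfl

theorem exponentSum_map_A_three {d : ℕ → (P 3 →* P 2)} (hd : IsStrandRemovalFamily 3 d)
    {k i j : ℕ} (hk : 1 ≤ k) (hk3 : k ≤ 3) (hi : 1 ≤ i) (hij : i < j) (hj : j ≤ 3) :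
    Multiplicative.toAdd (exponentSum 2 (d k (A 3 i j))) = if k = i ∨ k = j then 0 else 2 := by
  split_ifs with hkij
  · rw [(hd k hk hk3).map_A_of_eq hi hij hj hkij]; rfl
  · rw [not_or] at hkij
    rw [(hd k hk hk3).map_A_of_ne hi hij hj hkij.1 hkij.2]
    have : A (3 - 1) (phi k i) (phi k j) = A 2 1 2 := by
      have : i ≤ 2 := by omega
      interval_cases k <;> interval_cases i <;> interval_cases j <;> simp_all [phi]
    rw [this, exponentSum_A_two]; rfl

section FourStrands

theorem A₀_four_four : A₀ 4 4 = (A 4 1 4 * A 4 2 4 * A 4 3 4)⁻¹ := by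
  apply Subtype.ext
  simp [A₀, A0gen, A, List.range_succ, ASym, mul_assoc]

variable {D : ℕ → (P 4 →* P 3)} {Θ : MulAut (P 4)}

theorem map_A_four_eq_one (hD : IsStrandRemovalFamily 4 D) {i k : ℕ} (hi : 1 ≤ i) (hi3 : i ≤ 3)
    (hk : k = i ∨ k = 4) : D k (A 4 i 4) = 1 :=
  (hD k (by omega) (by omega)).map_A_of_eq hi (by omega) le_rfl hk

theorem bracket_bracket_A_four_mem_brunnian (hD : IsStrandRemovalFamily 4 D) :
    bracket (bracket (A 4 1 4) (A 4 3 4)) (A 4 2 4) ∈ Brunnian 4 D := by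
  rw [mem_brunnian_iff]
  intro k hk1 hk4
  interval_cases k <;>
    simp [map_bracket, map_A_four_eq_one hD (i := 1), map_A_four_eq_one hD (i := 2),
      map_A_four_eq_one hD (i := 3)]

theorem bracket_conj_bracket_A_four_mem_brunnian (hD : IsStrandRemovalFamily 4 D) :
    bracket (A 4 1 4 * bracket (A 4 1 4) (A 4 2 4)⁻¹ * (A 4 1 4)⁻¹) (A 4 3 4) ∈ Brunnian 4 D := by
  rw [mem_brunnian_iff]
  intro k hk1 hk4
  interval_cases k <;>
    simp [map_bracket, map_A_four_eq_one hD (i := 1), map_A_four_eq_one hD (i := 2),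
      map_A_four_eq_one hD (i := 3)]

theorem map_one_A_two_three (hD : IsStrandRemovalFamily 4 D) : D 1 (A 4 2 3) = A 3 1 2 :=
  (hD 1 le_rfl (by norm_num)).map_A_of_lt (by norm_num) (by norm_num) (by norm_num)

theorem map_one_A_two_four (hD : IsStrandRemovalFamily 4 D) : D 1 (A 4 2 4) = A 3 1 3 :=
  (hD 1 le_rfl (by norm_num)).map_A_of_lt (by norm_num) (by norm_num) (by norm_num)

theorem map_one_A_three_four (hD : IsStrandRemovalFamily 4 D) : D 1 (A 4 3 4) = A 3 2 3 :=
  (hD 1 le_rfl (by norm_num)).map_A_of_lt (by norm_num) (by norm_num) (by norm_num)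

theorem del_four_A_one_four (hD : IsStrandRemovalFamily 4 D) (hΘ : IsTheta 4 Θ) :
    del 4 D Θ (A 4 1 4) = (A 3 2 3)⁻¹ * (A 3 1 3)⁻¹ := by
  rw [del, MonoidHom.comp_apply, MulEquiv.coe_toMonoidHom, hΘ.2 4 (by norm_num) le_rfl,
    A₀_four_four]
  simp [map_A_four_eq_one hD (i := 1), map_one_A_two_four hD, map_one_A_three_four hD]

theorem del_four_A_two_four (hD : IsStrandRemovalFamily 4 D) (hΘ : IsTheta 4 Θ) :
    del 4 D Θ (A 4 2 4) = A 3 1 3 := by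
  rw [del, MonoidHom.comp_apply, MulEquiv.coe_toMonoidHom,
    hΘ.1 2 4 le_rfl (by norm_num) le_rfl, map_one_A_two_four hD]

theorem del_four_A_three_four (hD : IsStrandRemovalFamily 4 D) (hΘ : IsTheta 4 Θ) :
    del 4 D Θ (A 4 3 4) = A 3 2 3 := by
  rw [del, MonoidHom.comp_apply, MulEquiv.coe_toMonoidHom,
    hΘ.1 3 4 (by norm_num) (by norm_num) le_rfl, map_one_A_three_four hD]

theorem del_four_surjective (hD : IsStrandRemovalFamily 4 D) :
    Function.Surjective (del 4 D Θ) := by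
  have hrange : closure {A 3 1 2, A 3 1 3, A 3 2 3} ≤ (del 4 D Θ).range := by
    rw [closure_le]
    rintro _ (rfl | rfl | rfl) <;> simp only [SetLike.mem_coe, MonoidHom.mem_range, del,
      MonoidHom.comp_apply, MulEquiv.coe_toMonoidHom]
    exacts [⟨Θ.symm (A 4 2 3), by rw [MulEquiv.apply_symm_apply, map_one_A_two_three hD]⟩,
      ⟨Θ.symm (A 4 2 4), by rw [MulEquiv.apply_symm_apply, map_one_A_two_four hD]⟩,
      ⟨Θ.symm (A 4 3 4), by rw [MulEquiv.apply_symm_apply, map_one_A_three_four hD]⟩]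
  rw [closure_A_three] at hrange
  exact fun x => hrange (mem_top x)

theorem heisenbergClosure_le_Bd (hD : IsStrandRemovalFamily 4 D) (hΘ : IsTheta 4 Θ) :
    heisenbergClosure (A 3 1 2) (A 3 2 3) ≤ Bd 3 D Θ := by
  have : (Bd 3 D Θ).Normal := Normal.map inferInstance _ (del_four_surjective hD)
  have ha : A 3 1 2 = fullTwist 3 * ((A 3 2 3)⁻¹ * (A 3 1 3)⁻¹) := by
    rw [fullTwist_three]; group
  set Γ := bracket (A 3 1 2) (A 3 2 3) with hΓdef
  have hΓ : Γ = bracket ((A 3 2 3)⁻¹ * (A 3 1 3)⁻¹) (A 3 2 3) := by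
    rw [hΓdef]
    nth_rw 1 [ha]
    exact bracket_mul_left_of_commute (commute_fullTwist_three _)
  have hcommute (u : P 3) : bracket Γ u ∈ Bd 3 D Θ ↔
      Commute (QuotientGroup.mk' (Bd 3 D Θ) Γ) (QuotientGroup.mk' (Bd 3 D Θ) u) := by
    rw [← bracket_eq_one_iff, ← map_bracket, ← MonoidHom.mem_ker, QuotientGroup.ker_mk']
  have hp : bracket Γ (A 3 1 3) ∈ Bd 3 D Θ := by
    have : _ ∈ Bd 3 D Θ := mem_map_of_mem _ (bracket_bracket_A_four_mem_brunnian hD)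
    rwa [map_bracket, map_bracket, del_four_A_one_four hD hΘ, del_four_A_two_four hD hΘ,
      del_four_A_three_four hD hΘ, ← hΓ] at this
  have hb : bracket Γ (A 3 2 3) ∈ Bd 3 D Θ := by
    have : _ ∈ Bd 3 D Θ := mem_map_of_mem _ (bracket_conj_bracket_A_four_mem_brunnian hD)
    simp only [map_bracket, map_mul, map_inv, del_four_A_one_four hD hΘ,
      del_four_A_two_four hD hΘ, del_four_A_three_four hD hΘ] at this
    convert this using 2
    rw [hΓ, bracket, bracket]; group
  refine heisenbergClosure_le ((hcommute _).2 ?_) hb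
  rw [ha, map_mul, map_mul, map_inv, map_inv]
  exact ((commute_fullTwist_three Γ).symm.map _).mul_right
    (((hcommute _).1 hb).inv_right.mul_right ((hcommute _).1 hp).inv_right)

end FourStrands

theorem exists_mul_bracket_zpow_inv_mem_of_mem_brunnian {d : ℕ → (P 3 →* P 2)}
    (hd : IsStrandRemovalFamily 3 d) {x : P 3} (hx : x ∈ Brunnian 3 d) : ∃ k : ℤ,
      x * (bracket (A 3 1 2) (A 3 2 3) ^ k)⁻¹ ∈ heisenbergClosure (A 3 1 2) (A 3 2 3) := by
  obtain ⟨α, β, k, γ, hmem⟩ := exists_normalForm_mul_inv_mem (commute_fullTwist_three _)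
    (commute_fullTwist_three _) closure_A_one_two_A_two_three_fullTwist x
  let e (κ i j : ℕ) : ℤ := Multiplicative.toAdd (exponentSum 2 (d κ (A 3 i j)))
  have hsum (κ : ℕ) (hκ : 1 ≤ κ) (hκ3 : κ ≤ 3) :
      α * e κ 1 2 + β * e κ 2 3 + γ * (e κ 1 2 + e κ 1 3 + e κ 2 3) = 0 := by
    have h := heisenbergClosure_le_ker
      ((exponentSum 2).comp ((PureBraid 2).subtype.comp (d κ))) hmem
    rw [MonoidHom.mem_ker] at h
    simp only [map_mul, map_inv, map_zpow, map_bracket_eq_one, fullTwist_three] at h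
    simp only [MonoidHom.comp_apply, mem_brunnian_iff.1 hx κ hκ hκ3, map_one, one_zpow, one_mul,
      mul_one, inv_eq_one, Subgroup.subtype_apply] at h
    have h' := congrArg Multiplicative.toAdd h
    simp only [toAdd_mul, toAdd_zpow, toAdd_one, smul_eq_mul] at h'
    linear_combination h'
  have h1 := hsum 1 le_rfl (by norm_num)
  have h2 := hsum 2 (by norm_num) (by norm_num)
  have h3 := hsum 3 (by norm_num) le_rfl
  simp (disch := omega) only [e, exponentSum_map_A_three hd] at h1 h2 h3
  norm_num at h1 h2 h3
  obtain ⟨rfl, rfl, rfl⟩ : α = 0 ∧ β = 0 ∧ γ = 0 := by omega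
  exact ⟨k, by simpa using hmem⟩

theorem commutator_powers_mod_Bd3_general
    (d : ℕ → (P 3 →* P 2))
    (hd : ∀ k, 1 ≤ k → k ≤ 3 → IsStrandRemoval 3 k (d k))
    (θ : MulAut (P 3))
    (D : ℕ → (P 4 →* P 3))
    (hD : ∀ k, 1 ≤ k → k ≤ 4 → IsStrandRemoval 4 k (D k))
    (Θ : MulAut (P 4)) (hΘ : IsTheta 4 Θ) :
    (∀ m₁ m₂ : ℤ, m₁ ≠ 0 → m₂ ≠ 0 →
      ((A 3 1 2 ^ m₁)⁻¹ * (A 3 2 3 ^ m₂)⁻¹ * A 3 1 2 ^ m₁ * A 3 2 3 ^ m₂) *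
          ((A 3 1 2)⁻¹ * (A 3 2 3)⁻¹ * A 3 1 2 * A 3 2 3) ^ (-(m₁ * m₂)) ∈ Bd 3 D Θ) ∧
      ∀ x ∈ Zgrp 3 d θ, ∃ k : ℤ,
        x * (((A 3 1 2)⁻¹ * (A 3 2 3)⁻¹ * A 3 1 2 * A 3 2 3) ^ k)⁻¹ ∈ Bd 3 D Θ := by
  have hBd := heisenbergClosure_le_Bd hD hΘ
  refine ⟨fun m₁ m₂ _ _ => hBd (bracket_zpow_zpow_mul_mem m₁ m₂), fun x hx => ?_⟩
  obtain ⟨k, hk⟩ := exists_mul_bracket_zpow_inv_mem_of_mem_brunnian hd (mem_inf.1 hx).1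
  exact ⟨k, hBd hk⟩

/-- With `a = A_{1,2}` and `b = A_{2,3}` in `P 3`: for all nonzero integers `n, m`, the element
`[aⁿ, bᵐ] ⬝ [a,b]^{-nm}` lies in `Bd_3`; consequently the coset of `[a,b]` generates
`Z_3 / Bd_3` (here `[x,y] = x⁻¹y⁻¹xy`). -/
theorem commutator_powers_mod_Bd3
    (d : ℕ → (P 3 →* P 2))
    (hd : ∀ k, 1 ≤ k → k ≤ 3 → IsStrandRemoval 3 k (d k))
    (θ : MulAut (P 3)) (hθ : IsTheta 3 θ)
    (D : ℕ → (P 4 →* P 3))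
    (hD : ∀ k, 1 ≤ k → k ≤ 4 → IsStrandRemoval 4 k (D k))
    (Θ : MulAut (P 4)) (hΘ : IsTheta 4 Θ) :
    (∀ m₁ m₂ : ℤ, m₁ ≠ 0 → m₂ ≠ 0 →
      ((A 3 1 2 ^ m₁)⁻¹ * (A 3 2 3 ^ m₂)⁻¹ * A 3 1 2 ^ m₁ * A 3 2 3 ^ m₂) *
          ((A 3 1 2)⁻¹ * (A 3 2 3)⁻¹ * A 3 1 2 * A 3 2 3) ^ (-(m₁ * m₂)) ∈ Bd 3 D Θ) ∧
      ∀ x ∈ Zgrp 3 d θ, ∃ k : ℤ,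
        x * (((A 3 1 2)⁻¹ * (A 3 2 3)⁻¹ * A 3 1 2 * A 3 2 3) ^ k)⁻¹ ∈ Bd 3 D Θ :=
  commutator_powers_mod_Bd3_general d hd θ D hD Θ hΘ

end Braids
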